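/- With f = AA*, g = A e₃ A* as above and the exterior product on tangent spaces defined by X × Y = (i/2)(X p⁻¹ Y - Y p⁻¹ X) at base point p, it holds that f' × f_z̄ = (i/2)λ · A e₃ A* and g' × g_z̄ = -(i/2)λ · AA*, where λ = αᾱ - ββ̄ = |α|² - |β|². -/

import Mathlib

open Matrix Complex ComplexConjugate

def e3 : Matrix (Fin 2) (Fin 2) ℂ := !![1, 0; 0, -1]

noncomputable def cross (p X Y : Matrix (Fin 2) (Fin 2) ℂ) :
    Matrix (Fin 2) (Fin 2) ℂ :=
  (Complex.I / 2) • (X * p⁻¹ * Y - Y * p⁻¹ * X)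

/-! The cross product is natural under `p ↦ A p Aᴴ` for every `A ∈ GL(2,ℂ)`, so both identities
reduce to the base points `1` and `e₃` with `A = 1`, where they are explicit `2 × 2` computations. -/

theorem Matrix.mul_mul_inv_mul_mul_of_isUnit {n R : Type*} [Fintype n] [DecidableEq n]
    [CommRing R] {P Q : Matrix n n R} (hP : IsUnit P.det) (hQ : IsUnit Q.det)
    (M B N : Matrix n n R) :
    P * M * Q * (P * B * Q)⁻¹ * (P * N * Q) = P * (M * B⁻¹ * N) * Q := by
  simp only [Matrix.mul_inv_rev, Matrix.mul_assoc,
    Matrix.mul_nonsing_inv_cancel_left _ _ hQ, Matrix.nonsing_inv_mul_cancel_left _ _ hP]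

theorem cross_congr_conjTranspose {A : Matrix (Fin 2) (Fin 2) ℂ} (hA : IsUnit A.det)
    (p X Y : Matrix (Fin 2) (Fin 2) ℂ) :
    cross (A * p * Aᴴ) (A * X * Aᴴ) (A * Y * Aᴴ) = A * cross p X Y * Aᴴ := by
  have hAH : IsUnit Aᴴ.det := by
    simpa [Matrix.det_conjTranspose] using hA.map (starRingEnd ℂ)
  simp only [cross, Matrix.mul_mul_inv_mul_mul_of_isUnit hA hAH, Matrix.mul_smul,
    Matrix.smul_mul, ← Matrix.mul_sub, ← Matrix.sub_mul]

theorem e3_inv : e3⁻¹ = e3 :=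
  Matrix.inv_eq_right_inv <| by
    simp [e3, Matrix.one_fin_two]

theorem conjTranspose_offDiag (α β : ℂ) :
    (!![0, α; β, 0])ᴴ = !![0, conj β; conj α, 0] := by
  ext i j; fin_cases i <;> fin_cases j <;> simp

theorem cross_one_offDiag (α β : ℂ) :
    cross 1 !![0, α; β, 0] (!![0, α; β, 0])ᴴ
      = ((Complex.I / 2) * (α * conj α - β * conj β)) • e3 := by
  rw [cross, inv_one, conjTranspose_offDiag, e3]
  ext i j; fin_cases i <;> fin_cases j <;> simp <;> ring

theorem cross_e3_offDiag (α β : ℂ) :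
    cross e3 (!![0, α; β, 0] * e3) (e3 * (!![0, α; β, 0])ᴴ)
      = (-(Complex.I / 2) * (α * conj α - β * conj β)) • 1 := by
  rw [cross, e3_inv, conjTranspose_offDiag, e3]
  ext i j; fin_cases i <;> fin_cases j <;> simp <;> ring

/-- With `f = AAᴴ`, `g = Ae₃Aᴴ`, `f' = ADAᴴ`, `f_z̄ = ADᴴAᴴ`, `g' = ADe₃Aᴴ`,
`g_z̄ = Ae₃DᴴAᴴ` (`D = [[0,α],[β,0]]`, `det A = 1`), one has
`f' × f_z̄ = (i/2)λ·Ae₃Aᴴ` and `g' × g_z̄ = -(i/2)λ·AAᴴ`, where `λ = |α|²-|β|²`. -/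
theorem cross_first_derivatives (A : Matrix (Fin 2) (Fin 2) ℂ) (hA : A.det = 1)
    (α β : ℂ) :
    cross (A * Aᴴ) (A * !![0, α; β, 0] * Aᴴ) (A * (!![0, α; β, 0])ᴴ * Aᴴ)
        = ((Complex.I / 2) * (α * conj α - β * conj β)) • (A * e3 * Aᴴ) ∧
    cross (A * e3 * Aᴴ) (A * !![0, α; β, 0] * e3 * Aᴴ)
        (A * e3 * (!![0, α; β, 0])ᴴ * Aᴴ)
        = (-(Complex.I / 2) * (α * conj α - β * conj β)) • (A * Aᴴ) := by
  have hAu : IsUnit A.det := hA ▸ isUnit_one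
  constructor
  · have h := cross_congr_conjTranspose hAu 1 !![0, α; β, 0] (!![0, α; β, 0])ᴴ
    rwa [Matrix.mul_one, cross_one_offDiag, Matrix.mul_smul, Matrix.smul_mul] at h
  · have h := cross_congr_conjTranspose hAu e3 (!![0, α; β, 0] * e3) (e3 * (!![0, α; β, 0])ᴴ)
    rw [cross_e3_offDiag, Matrix.mul_smul, Matrix.smul_mul, Matrix.mul_one] at h
    simpa only [Matrix.mul_assoc] using h
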